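/- arXiv:1105.4665 — 5 statements merged into one kernel-verified Lean document; each statement's English description precedes it below -/
import Mathlib

section
/- Contrapositive of the main lemma: if the CSP induced by the LP beliefs contains a frustrated subgraph (a subcollection of cliques with no common satisfying assignment), then the LP solution cannot be fully integral, i.e., there exists some clique c and configuration x_c with 0 < b_c(x_c) < 1. -/
/-!
If no belief were strictly fractional, every clique belief would be a point mass at a single
configuration `U j`. Marginal consistency on the overlap of two cliques forces these
configurations to agree wherever the cliques meet, so they glue to one global assignment.
That assignment has positive belief on every clique, so no subcollection of cliques is frustrated.
-/

open Finset

theorem exists_forall_pos_iff_eq_of_integral {α : Type*} [Fintype α] {p : α → ℝ}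
    (hnn : ∀ a, 0 ≤ p a) (hsum : ∑ a, p a = 1) (hint : ∀ a, 0 < p a → 1 ≤ p a) :
    ∃ a, ∀ a', 0 < p a' ↔ a' = a := by
  classical
  obtain ⟨a, -, ha⟩ : ∃ a ∈ univ, 0 < p a :=
    (sum_pos_iff_of_nonneg fun a _ ↦ hnn a).1 (hsum ▸ one_pos)
  refine ⟨a, fun a' ↦ ⟨fun ha' ↦ ?_, fun h ↦ h ▸ ha⟩⟩
  by_contra hne
  have : p a' + p a ≤ ∑ a, p a := by
    rw [← sum_pair hne]
    exact sum_le_sum_of_subset_of_nonneg (subset_univ _) fun a _ _ ↦ hnn a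
  linarith [hint a ha, hint a' ha']

theorem exists_extend_of_agree {V ι β : Type*} [Inhabited β] (C : ι → Finset V)
    (U : ∀ j, {v // v ∈ C j} → β)
    (hagree : ∀ j k v (hj : v ∈ C j) (hk : v ∈ C k), U j ⟨v, hj⟩ = U k ⟨v, hk⟩) :
    ∃ x : V → β, ∀ j (v : {v // v ∈ C j}), x v = U j v := by
  classical
  refine ⟨fun v ↦ if h : ∃ j, v ∈ C j then U h.choose ⟨v, h.choose_spec⟩ else default,
    fun j v ↦ ?_⟩
  have h : ∃ k, v.val ∈ C k := ⟨j, v.property⟩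
  simp only [dif_pos h]
  exact hagree _ _ _ _ _

theorem point_masses_agree_of_marginal_consistent {V ι β : Type*} [DecidableEq V]
    [DecidableEq β] [Fintype β] [Inhabited β] {C : ι → Finset V}
    {b : ∀ j, ({v // v ∈ C j} → β) → ℝ} {j k : ι} (hnn : ∀ u, 0 ≤ b j u)
    (hcons : ∀ x : V → β,
      (∑ u ∈ univ.filter
          (fun u : {v // v ∈ C j} → β => ∀ i : {v // v ∈ C j}, i.val ∈ C k → u i = x i.val),
        b j u) =
      (∑ u ∈ univ.filter
          (fun u : {v // v ∈ C k} → β => ∀ i : {v // v ∈ C k}, i.val ∈ C j → u i = x i.val),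
        b k u))
    {U : ∀ j, {v // v ∈ C j} → β} (hU : ∀ j u, 0 < b j u ↔ u = U j)
    (v : V) (hj : v ∈ C j) (hk : v ∈ C k) :
    U j ⟨v, hj⟩ = U k ⟨v, hk⟩ := by
  -- The `j`-marginal at `x` carries the mass of `U j`; on the `k` side only `U k` has mass.
  set x : V → β := fun v ↦ if h : v ∈ C j then U j ⟨v, h⟩ else default
  have hUj : U j ∈ univ.filter
      (fun u : {v // v ∈ C j} → β => ∀ i : {v // v ∈ C j}, i.val ∈ C k → u i = x i.val) := by
    simp [x]
  have hpos : 0 < ∑ u ∈ univ.filter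
      (fun u : {v // v ∈ C j} → β => ∀ i : {v // v ∈ C j}, i.val ∈ C k → u i = x i.val),
      b j u :=
    (sum_pos_iff_of_nonneg fun u _ ↦ hnn u).2 ⟨U j, hUj, (hU j _).2 rfl⟩
  rw [hcons x] at hpos
  obtain ⟨u, hu, hupos⟩ := exists_lt_of_sum_lt (hpos.trans_eq' sum_const_zero.symm)
  rw [(hU k u).1 hupos, mem_filter] at hu
  simp [hu.2 ⟨v, hk⟩ hj, x, hj]

theorem frustrated_subgraph_implies_fractional_general
    (n : ℕ) (ι : Type)
    (C : ι → Finset (Fin n))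
    (b : ∀ j : ι, ({v // v ∈ C j} → Bool) → ℝ)
    (hnn : ∀ j : ι, ∀ u : {v // v ∈ C j} → Bool, 0 ≤ b j u)
    (hsum : ∀ j : ι, (∑ u : {v // v ∈ C j} → Bool, b j u) = 1)
    (hcons : ∀ j k : ι, ∀ x : Fin n → Bool,
      (∑ u ∈ Finset.univ.filter
          (fun u : {v // v ∈ C j} → Bool =>
            ∀ i : {v // v ∈ C j}, i.val ∈ C k → u i = x i.val), b j u) =
      (∑ u ∈ Finset.univ.filter
          (fun u : {v // v ∈ C k} → Bool =>
            ∀ i : {v // v ∈ C k}, i.val ∈ C j → u i = x i.val), b k u))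
    (S : Finset ι)
    (hfrustrated : ¬ ∃ x : Fin n → Bool, ∀ j ∈ S,
      0 < b j (fun i : {v // v ∈ C j} => x i.val)) :
    ∃ (j : ι) (u : {v // v ∈ C j} → Bool), 0 < b j u ∧ b j u < 1 := by
  by_contra! hint
  choose U hU using fun j ↦ exists_forall_pos_iff_eq_of_integral (hnn j) (hsum j) (hint j)
  obtain ⟨x, hx⟩ := exists_extend_of_agree C U fun j k ↦
    point_masses_agree_of_marginal_consistent (hnn j) (hcons j k) hU
  refine hfrustrated ⟨x, fun j _ ↦ ?_⟩
  rw [(funext (hx j) : (fun i : {v // v ∈ C j} ↦ x i.val) = U j)]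
  exact (hU j _).2 rfl

/-- Contrapositive of the main lemma: if the CSP induced by the LP beliefs (nonnegative,
normalized, pairwise-marginalization-consistent) contains a frustrated subgraph, i.e. a
subcollection of cliques admitting no common satisfying assignment (an assignment whose
restriction to each clique has positive belief), then the LP solution cannot be fully
integral: some clique has a configuration with strictly fractional belief. -/
theorem frustrated_subgraph_implies_fractional
    (n : ℕ) (ι : Type) [Fintype ι]
    (C : ι → Finset (Fin n))
    (b : ∀ j : ι, ({v // v ∈ C j} → Bool) → ℝ)
    (hnn : ∀ j : ι, ∀ u : {v // v ∈ C j} → Bool, 0 ≤ b j u)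
    (hsum : ∀ j : ι, (∑ u : {v // v ∈ C j} → Bool, b j u) = 1)
    (hcons : ∀ j k : ι, ∀ x : Fin n → Bool,
      (∑ u ∈ Finset.univ.filter
          (fun u : {v // v ∈ C j} → Bool =>
            ∀ i : {v // v ∈ C j}, i.val ∈ C k → u i = x i.val), b j u) =
      (∑ u ∈ Finset.univ.filter
          (fun u : {v // v ∈ C k} → Bool =>
            ∀ i : {v // v ∈ C k}, i.val ∈ C j → u i = x i.val), b k u))
    (S : Finset ι)
    (hfrustrated : ¬ ∃ x : Fin n → Bool, ∀ j ∈ S,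
      0 < b j (fun i : {v // v ∈ C j} => x i.val)) :
    ∃ (j : ι) (u : {v // v ∈ C j} → Bool), 0 < b j u ∧ b j u < 1 :=
  frustrated_subgraph_implies_fractional_general n ι C b hnn hsum hcons S hfrustrated
end

section
/- A 2-SAT instance (conjunction of clauses each involving at most 2 literals) is satisfiable if and only if its implication graph contains no variable x such that the literals x and ¬x lie in the same strongly connected component. -/
/-- A literal over `n` boolean variables: `(v, s)` asserts that variable `v` takes
value `s`. -/
abbrev Lit (n : ℕ) := Fin n × Bool

/-- Negation of a literal. -/
def negLit {n : ℕ} (l : Lit n) : Lit n := (l.1, !l.2)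

/-- A literal holds under an assignment. -/
def evalLit {n : ℕ} (a : Fin n → Bool) (l : Lit n) : Prop := a l.1 = l.2

/-- The implication graph of a 2-SAT formula `F` (a finite set of clauses, each a
disjunction of two literals): each clause `(l₁ ∨ l₂)` contributes the directed edges
`¬l₁ → l₂` and `¬l₂ → l₁`. -/
def ImpEdge {n : ℕ} (F : Finset (Lit n × Lit n)) (l l' : Lit n) : Prop :=
  ∃ cl ∈ F, (l = negLit cl.1 ∧ l' = cl.2) ∨ (l = negLit cl.2 ∧ l' = cl.1)

/-!
A satisfying assignment makes every literal reachable from a true literal true, so `x` and `¬x`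
cannot reach each other. Conversely, rank the literals by a linear extension of the condensation
of the implication graph, and make a literal true when it ranks strictly above its negation; by
hypothesis no literal ties with its negation. If a clause `l₁ ∨ l₂` were violated, its two edges
would close the cycle `rank l₁ ≤ rank ¬l₁ ≤ rank l₂ ≤ rank ¬l₂ ≤ rank l₁`, forcing a tie.
-/

universe u

open Relation

theorem Relation.exists_linearOrder_rank {α : Type u} (r : α → α → Prop) :
    ∃ (β : Type u) (_ : LinearOrder β) (rank : α → β),
      (∀ a b, r a b → rank a ≤ rank b) ∧
        ∀ a b, rank a = rank b → ReflTransGen r a b ∧ ReflTransGen r b a := by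
  let _ : Preorder α :=
    { le := ReflTransGen r
      le_refl := fun _ => .refl
      le_trans := fun _ _ _ => ReflTransGen.trans }
  refine ⟨LinearExtension (Antisymmetrization α (· ≤ ·)), inferInstance,
    toLinearExtension ∘ toAntisymmetrization (· ≤ ·), fun a b hab => ?_, fun a b hab => ?_⟩
  · exact toLinearExtension.monotone (toAntisymmetrization_mono (ReflTransGen.single hab))
  · exact Quotient.exact (s := AntisymmRel.setoid α (· ≤ ·)) hab

namespace TwoSat

variable {n : ℕ} {F : Finset (Lit n × Lit n)}

theorem evalLit_negLit (a : Fin n → Bool) (l : Lit n) :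
    evalLit a (negLit l) ↔ ¬ evalLit a l :=
  Bool.eq_not_iff

theorem evalLit_of_impEdge {a : Fin n → Bool}
    (ha : ∀ cl ∈ F, evalLit a cl.1 ∨ evalLit a cl.2) {l l' : Lit n}
    (h : ImpEdge F l l') (hl : evalLit a l) : evalLit a l' := by
  obtain ⟨cl, hcl, ⟨rfl, rfl⟩ | ⟨rfl, rfl⟩⟩ := h
  · exact (ha cl hcl).resolve_left ((evalLit_negLit a _).mp hl)
  · exact (ha cl hcl).resolve_right ((evalLit_negLit a _).mp hl)

theorem evalLit_of_reflTransGen {a : Fin n → Bool}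
    (ha : ∀ cl ∈ F, evalLit a cl.1 ∨ evalLit a cl.2) {l l' : Lit n}
    (h : ReflTransGen (ImpEdge F) l l') (hl : evalLit a l) : evalLit a l' := by
  induction h with
  | refl => exact hl
  | tail _ hedge ih => exact evalLit_of_impEdge ha hedge ih

def rankAssignment {β : Type*} [LinearOrder β] (rank : Lit n → β) (v : Fin n) : Bool :=
  decide (rank (v, false) < rank (v, true))

theorem evalLit_rankAssignment_iff {β : Type*} [LinearOrder β] {rank : Lit n → β}
    (hne : ∀ l, rank (negLit l) ≠ rank l) (l : Lit n) :
    evalLit (rankAssignment rank) l ↔ rank (negLit l) < rank l := by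
  obtain ⟨v, _ | _⟩ := l
  · simpa [evalLit, negLit, rankAssignment] using (hne (v, false)).le_iff_lt
  · simp [evalLit, negLit, rankAssignment]

theorem rankAssignment_satisfies {β : Type*} [LinearOrder β] {rank : Lit n → β}
    (hmono : ∀ l l', ImpEdge F l l' → rank l ≤ rank l')
    (hne : ∀ l, rank (negLit l) ≠ rank l) :
    ∀ cl ∈ F, evalLit (rankAssignment rank) cl.1 ∨ evalLit (rankAssignment rank) cl.2 := by
  intro cl hcl
  by_contra! hviol
  simp only [evalLit_rankAssignment_iff hne, not_lt] at hviol
  obtain ⟨h₁, h₂⟩ := hviol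
  have e₁ : rank (negLit cl.1) ≤ rank cl.2 := hmono _ _ ⟨cl, hcl, .inl ⟨rfl, rfl⟩⟩
  have e₂ : rank (negLit cl.2) ≤ rank cl.1 := hmono _ _ ⟨cl, hcl, .inr ⟨rfl, rfl⟩⟩
  exact hne cl.1 (le_antisymm (e₁.trans (h₂.trans e₂)) h₁)

end TwoSat

open TwoSat in
/-- A 2-SAT instance is satisfiable if and only if its implication graph contains no
variable `v` whose two literals lie in the same strongly connected component, i.e. such
that `(v, true)` and `(v, false)` are mutually reachable. -/
theorem twoSat_satisfiable_iff_no_contradictory_scc {n : ℕ}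
    (F : Finset (Lit n × Lit n)) :
    (∃ a : Fin n → Bool, ∀ cl ∈ F, evalLit a cl.1 ∨ evalLit a cl.2) ↔
      ∀ v : Fin n,
        ¬ (Relation.ReflTransGen (ImpEdge F) (v, true) (v, false) ∧
           Relation.ReflTransGen (ImpEdge F) (v, false) (v, true)) := by
  constructor
  · rintro ⟨a, ha⟩ v ⟨htf, hft⟩
    cases hv : a v
    · exact absurd (evalLit_of_reflTransGen ha hft hv) (by simp [evalLit, hv])
    · exact absurd (evalLit_of_reflTransGen ha htf hv) (by simp [evalLit, hv])
  · intro hscc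
    obtain ⟨β, _, rank, hmono, hscc_of_eq⟩ := exists_linearOrder_rank (ImpEdge F)
    refine ⟨rankAssignment rank, rankAssignment_satisfies hmono ?_⟩
    rintro ⟨v, _ | _⟩ heq
    · exact hscc v (hscc_of_eq _ _ heq)
    · exact hscc v (hscc_of_eq _ _ heq).symm
end

section
/- If a joint probability distribution p on {0,1}^n has marginals matching the pairwise beliefs, and the implication graph contains a directed path from node (x_i = 1) to node (x_i = 0), then the marginal of p satisfies p(x_i = 1) = 0. -/
theorem Relation.ReflTransGen.imp_of_forall_imp {α : Type*} {r : α → α → Prop} {P : α → Prop}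
    (hr : ∀ a b, r a b → P a → P b) {a b : α} (hab : Relation.ReflTransGen r a b) :
    P a → P b := by
  induction hab with
  | refl => exact id
  | tail _ hbc ih => exact hr _ _ hbc ∘ ih

/-- If a joint probability distribution `p` on `{0,1}ⁿ` has marginals matching the
pairwise beliefs, so that every implication edge `(x_j = a) → (x_k = c)` is valid for
`p` (every configuration in the support of `p` with `x_j = a` has `x_k = c`), and the
implication graph contains a directed path from the node `(x_i = 1)` to the node
`(x_i = 0)`, then the marginal of `p` satisfies `p(x_i = 1) = 0`. -/
theorem path_forces_zero_marginal {n : ℕ}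
    (E : (Fin n × Bool) → (Fin n × Bool) → Prop)
    (p : (Fin n → Bool) → ℝ)
    (hnn : ∀ x, 0 ≤ p x)
    (hvalid : ∀ (j k : Fin n) (a c : Bool), E (j, a) (k, c) →
      ∀ x : Fin n → Bool, 0 < p x → x j = a → x k = c)
    (i : Fin n)
    (hpath : Relation.ReflTransGen E (i, true) (i, false)) :
    (∑ x ∈ Finset.univ.filter (fun x : Fin n → Bool => x i = true), p x) = 0 := by
  refine Finset.sum_eq_zero fun x hx => ?_
  have hxi : x i = true := (Finset.mem_filter.mp hx).2
  by_contra hpx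
  have hpos : 0 < p x := (hnn x).lt_of_ne' hpx
  have hxi' : x i = false :=
    hpath.imp_of_forall_imp (P := fun u : Fin n × Bool => x u.1 = u.2)
      (fun _ _ hE => hvalid _ _ _ _ hE x hpos) hxi
  simp [hxi] at hxi'
end

section
/- Local consistency on a tree implies global consistency: if cliques of a CSP over binary variables form a tree structure (junction tree, i.e., satisfying the running intersection property) and beliefs on the cliques agree on all pairwise separator marginals, then there is a global joint distribution whose clique marginals equal the given beliefs; consequently the CSP induced by the supports of these beliefs is not frustrated. -/
/-!
The beliefs are glued along the tree one clique at a time. A connected set `s` of cliques is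
grown by a clique `ℓ` adjacent to some `m ∈ s`. The edge `ℓm` is a bridge of the tree, so by
running intersection every variable that `ℓ` shares with `s` lies in the separator `C ℓ ∩ C m`,
where the beliefs of `ℓ` and `m` agree. If `P` realises the beliefs of `s` on their variables
`V` and `q` is the belief of `ℓ` spread uniformly over the other variables, then
`P(x_V) · q(x | x_V)` realises both: `q` sees `x_V` only through the separator. A point of
positive mass of the final distribution is a global assignment in the support of every belief.
-/

open Finset

namespace JunctionTree

lemma restrict_surjective {α β : Type*} [Nonempty β] (c : Finset α) :
    Function.Surjective (c.restrict : (α → β) → (c → β)) := by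
  intro u
  classical
  exact ⟨fun i => if h : i ∈ c then u ⟨i, h⟩ else Classical.arbitrary β,
    funext fun i => dif_pos i.2⟩

section Marginals

variable {α β : Type*} [Fintype α] [DecidableEq α] [Fintype β]

noncomputable def lift (c : Finset α) (g : (c → β) → ℝ) (x : α → β) : ℝ :=
  g (c.restrict x) / (Fintype.card β : ℝ) ^ #cᶜ

lemma lift_nonneg {c : Finset α} {g : (c → β) → ℝ} (hg : 0 ≤ g) : 0 ≤ lift c g :=
  fun x => div_nonneg (hg _) (by positivity)

lemma dependsOn_lift {c : Finset α} {g : (c → β) → ℝ} : DependsOn (lift c g) c := fun x y h => by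
  simp only [lift]
  congr 2
  exact funext fun i => h i i.2

variable [DecidableEq β]

def fiber (A : Finset α) (x : α → β) : Finset (α → β) :=
  {y | ∀ i ∈ A, y i = x i}

@[simp] lemma mem_fiber {A : Finset α} {x y : α → β} :
    y ∈ fiber A x ↔ ∀ i ∈ A, y i = x i := by
  simp [fiber]

lemma card_fiber (A : Finset α) (x : α → β) : #(fiber A x) = Fintype.card β ^ #Aᶜ := by
  have : fiber A x = Fintype.piFinset fun i => if i ∈ A then {x i} else univ := by
    ext y
    simp only [mem_fiber, Fintype.mem_piFinset]
    refine forall_congr' fun i => ?_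
    split_ifs <;> simp [*]
  rw [this, Fintype.card_piFinset]
  simp [apply_ite, prod_ite, filter_not, compl_eq_univ_sdiff]

lemma card_fiber_inter {A B : Finset α} {x z : α → β} (hz : z ∈ fiber (A ∩ B) x) :
    #(fiber A x ∩ fiber B z) = Fintype.card β ^ #(A ∪ B)ᶜ := by
  rw [← card_fiber (A ∪ B) (A.piecewise x z)]
  congr 1
  ext y
  simp only [mem_fiber, mem_inter, mem_union, Finset.piecewise] at hz ⊢
  grind

lemma filter_restrict_eq_fiber (c : Finset α) (x : α → β) :
    ({y | c.restrict y = c.restrict x} : Finset (α → β)) = fiber c x := by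
  ext y
  simp [funext_iff]

/-- The `A`-marginal of `p`, kept as a function of the full assignment. -/
def marg (A : Finset α) (p : (α → β) → ℝ) (x : α → β) : ℝ :=
  ∑ y ∈ fiber A x, p y

lemma marg_empty (p : (α → β) → ℝ) (x : α → β) : marg ∅ p x = ∑ y, p y := by
  simp [marg, fiber]

lemma le_marg {p : (α → β) → ℝ} (hp : 0 ≤ p) (A : Finset α) (x : α → β) : p x ≤ marg A p x :=
  single_le_sum (fun y _ => hp y) (by simp)

lemma marg_le_marg_of_subset {p : (α → β) → ℝ} (hp : 0 ≤ p) {A B : Finset α} (hAB : A ⊆ B)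
    (x : α → β) : marg B p x ≤ marg A p x :=
  sum_le_sum_of_subset_of_nonneg (fun y hy => by simp_all [subset_iff]) fun y _ _ => hp y

lemma dependsOn_marg (A : Finset α) (p : (α → β) → ℝ) : DependsOn (marg A p) A := by
  intro x y h
  simp only [marg, fiber, mem_coe] at h ⊢
  congr 1
  ext z
  simp +contextual [h]

lemma marg_mul_of_dependsOn {A : Finset α} {f : (α → β) → ℝ} (hf : DependsOn f A)
    (p : (α → β) → ℝ) (x : α → β) : marg A (fun y => f y * p y) x = f x * marg A p x := by
  rw [marg, marg, mul_sum]
  refine sum_congr rfl fun y hy => ?_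
  rw [hf fun i hi => mem_fiber.1 hy i hi]

lemma marg_of_dependsOn {A : Finset α} {p : (α → β) → ℝ} (hp : DependsOn p A) (x : α → β) :
    marg A p x = (Fintype.card β : ℝ) ^ #Aᶜ * p x := by
  rw [marg, sum_congr rfl fun y hy => hp fun i hi => mem_fiber.1 hy i hi, sum_const, card_fiber,
    nsmul_eq_mul]
  push_cast
  ring

lemma marg_marg (A B : Finset α) (p : (α → β) → ℝ) (x : α → β) :
    marg A (marg B p) x = (Fintype.card β : ℝ) ^ #(A ∪ B)ᶜ * marg (A ∩ B) p x := by
  unfold marg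
  rw [sum_comm' (s' := fun z => fiber A x ∩ fiber B z) (t' := fiber (A ∩ B) x), mul_sum]
  · refine sum_congr rfl fun z hz => ?_
    rw [sum_const, card_fiber_inter hz, nsmul_eq_mul]
    push_cast
    ring
  · intro y z
    simp only [mem_fiber, mem_inter]
    grind

lemma marg_inter_of_dependsOn {B : Finset α} {p : (α → β) → ℝ} (hp : DependsOn p B)
    (A : Finset α) (x : α → β) :
    (Fintype.card β : ℝ) ^ #Bᶜ * marg A p x =
      (Fintype.card β : ℝ) ^ #(A ∪ B)ᶜ * marg (A ∩ B) p x := by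
  rw [← marg_marg, ← marg_mul_of_dependsOn (dependsOn_const _ |>.mono (Set.empty_subset _))]
  exact congrArg (marg A · x) (funext fun y => (marg_of_dependsOn hp y).symm)

variable [Nonempty β]

lemma marg_eq_of_marg_eq {A B : Finset α} {p q : (α → β) → ℝ} (hAB : A ⊆ B)
    (h : marg B p = marg B q) : marg A p = marg A q := by
  funext x
  have key := marg_marg A B p x
  rw [h, marg_marg, union_eq_right.2 hAB, inter_eq_left.2 hAB] at key
  exact (mul_left_cancel₀ (by positivity) key).symm

theorem exists_marg_eq_of_marg_inter_eq {V₁ V₂ : Finset α} {p₁ p₂ : (α → β) → ℝ}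
    (hp₁ : 0 ≤ p₁) (hp₂ : 0 ≤ p₂) (hdep : DependsOn p₂ V₂)
    (hsep : marg (V₁ ∩ V₂) p₁ = marg (V₁ ∩ V₂) p₂) :
    ∃ p, 0 ≤ p ∧ marg V₁ p = marg V₁ p₁ ∧ marg V₂ p = marg V₂ p₂ := by
  have hM := marg_inter_of_dependsOn hdep V₁
  set M := marg V₁ p₂
  set P := marg V₁ p₁
  have hMdep : DependsOn M (V₁ ∩ V₂ : Finset α) := fun x y h => by
    have hk : (Fintype.card β : ℝ) ^ #V₂ᶜ ≠ 0 := by positivity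
    exact mul_left_cancel₀ hk (by rw [hM, hM, dependsOn_marg _ _ h])
  have hP0 : ∀ x, M x = 0 → P x = 0 := by
    intro x hx
    have h0 : marg (V₁ ∩ V₂) p₁ x = 0 := by
      have := hM x
      rw [hx, mul_zero, eq_comm, mul_eq_zero] at this
      rw [hsep]
      exact this.resolve_left (by positivity)
    exact le_antisymm (h0 ▸ marg_le_marg_of_subset hp₁ inter_subset_left x)
      (sum_nonneg fun y _ => hp₁ y)
  have hmargP : marg V₂ P = fun x => (Fintype.card β : ℝ) ^ #V₂ᶜ * M x := by
    funext x
    rw [hM, marg_marg, union_comm, inter_comm, hsep]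
  -- `P` times the conditional law of `p₂` given the `V₁`-coordinates; where `M x = 0`,
  -- division by zero gives `0`, and `P x = 0` there anyway.
  refine ⟨fun x => P x * p₂ x / M x, fun x => ?_, funext fun x => ?_, funext fun x => ?_⟩
  · exact div_nonneg (mul_nonneg (sum_nonneg fun y _ => hp₁ y) (hp₂ x))
      ((hp₂ x).trans (le_marg hp₂ V₁ x))
  · have hdep₁ : DependsOn (fun y => P y / M y) V₁ := fun x y h => by
      simp only [dependsOn_marg V₁ _ h, P, M]
    calc marg V₁ (fun y => P y * p₂ y / M y) x = P x / M x * M x := by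
          simp only [← marg_mul_of_dependsOn hdep₁, div_mul_eq_mul_div, M]
      _ = P x := by
          by_cases hx : M x = 0
          · simp [hx, hP0 x hx]
          · field_simp
  · have hdep₂ : DependsOn (fun y => p₂ y / M y) V₂ := fun x y h => by
      have hS : ∀ i ∈ ((V₁ ∩ V₂ : Finset α) : Set α), x i = y i := fun i hi =>
        h i (mem_coe.2 (mem_inter.1 (mem_coe.1 hi)).2)
      simp only [hdep h, hMdep hS]
    calc marg V₂ (fun y => P y * p₂ y / M y) x = p₂ x / M x * marg V₂ P x := by
          simp only [← marg_mul_of_dependsOn hdep₂, mul_div_right_comm, mul_comm]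
      _ = marg V₂ p₂ x := by
          rw [hmargP, marg_of_dependsOn hdep]
          by_cases hx : M x = 0
          · simp [hx, le_antisymm ((le_marg hp₂ V₁ x).trans_eq hx) (hp₂ x)]
          · field_simp

end Marginals

section CliqueMarginals

variable {α β : Type*} [DecidableEq α] [Fintype β] [DecidableEq β] {c : Finset α}
  {g : (c → β) → ℝ}

def cliqueMarg (c : Finset α) (g : (c → β) → ℝ) (A : Finset α) (x : α → β) : ℝ :=
  ∑ u with ∀ i : c, ↑i ∈ A → u i = x i, g u

lemma cliqueMarg_inter_left (A : Finset α) (x : α → β) :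
    cliqueMarg c g (c ∩ A) x = cliqueMarg c g A x := by
  simp [cliqueMarg]

lemma cliqueMarg_empty (x : α → β) : cliqueMarg c g ∅ x = ∑ u, g u := by
  simp [cliqueMarg]

variable [Fintype α] [Nonempty β]

lemma marg_lift_self (x : α → β) : marg c (lift c g) x = g (c.restrict x) := by
  rw [marg_of_dependsOn dependsOn_lift, lift]
  field_simp

lemma marg_lift {A : Finset α} (hA : A ⊆ c) (x : α → β) :
    marg A (lift c g) x = cliqueMarg c g A x := by
  rw [marg, cliqueMarg,
    ← sum_fiberwise_of_maps_to (g := c.restrict) (t := {u | ∀ i : c, ↑i ∈ A → u i = x i})]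
  · refine sum_congr rfl fun u hu => ?_
    obtain ⟨x₀, rfl⟩ := restrict_surjective c u
    have hfib : {y ∈ fiber A x | c.restrict y = c.restrict x₀} = fiber c x₀ := by
      ext y
      simp only [mem_filter, mem_univ, true_and, restrict, Subtype.forall] at hu
      simp only [mem_filter, mem_fiber, funext_iff, restrict, Subtype.forall]
      grind
    rw [hfib, ← marg, marg_lift_self]
  · intro y hy
    simp only [mem_filter, mem_univ, true_and, mem_fiber] at hy ⊢
    exact fun i hi => hy i hi

end CliqueMarginals

section Tree

open SimpleGraph

variable {ι : Type*} {T : SimpleGraph ι}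

lemma _root_.SimpleGraph.Reachable.exists_walk_of_induce {s : Set ι} {u v : s}
    (h : (T.induce s).Reachable u v) : ∃ w : T.Walk u v, ∀ x ∈ w.support, x ∈ s := by
  obtain ⟨w⟩ := h
  refine ⟨w.map (Embedding.induce s).toHom, fun x hx => ?_⟩
  replace hx : x ∈ (w.map (Embedding.induce s).toHom).support := hx
  rw [Walk.support_map, List.mem_map] at hx
  obtain ⟨y, -, rfl⟩ := hx
  exact y.2

lemma _root_.SimpleGraph.IsAcyclic.mem_support_of_adj (hT : T.IsAcyclic) {ℓ m k : ι}
    (hadj : T.Adj ℓ m) (w₁ : T.Walk ℓ k) (w₂ : T.Walk k m) (hℓ : ℓ ∉ w₂.support) :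
    m ∈ w₁.support := by
  have hedge := isBridge_iff_forall_walk_mem_edges.1
    (isAcyclic_iff_forall_adj_isBridge.1 hT hadj) (w₁.append w₂)
  rcases List.mem_append.1 (Walk.edges_append w₁ w₂ ▸ hedge) with h | h
  · exact w₁.snd_mem_support_of_mem_edges h
  · exact absurd (w₂.fst_mem_support_of_mem_edges h) hℓ

variable {α : Type*} [DecidableEq α]

def RunningIntersection (T : SimpleGraph ι) (C : ι → Finset α) : Prop :=
  ∀ i j k (hj : i ∈ C j) (hk : i ∈ C k), (T.induce {l | i ∈ C l}).Reachable ⟨j, hj⟩ ⟨k, hk⟩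

lemma biUnion_inter_eq_of_adj {C : ι → Finset α} (hT : T.IsAcyclic)
    (hri : RunningIntersection T C) {s : Finset ι} (hs : (T.induce ↑s).Preconnected)
    {ℓ m : ι} (hm : m ∈ s) (hℓ : ℓ ∉ s) (hadj : T.Adj ℓ m) :
    s.biUnion C ∩ C ℓ = C m ∩ C ℓ := by
  ext i
  simp only [mem_inter, mem_biUnion]
  refine ⟨fun ⟨⟨k, hk, hik⟩, hiℓ⟩ => ⟨?_, hiℓ⟩, fun ⟨him, hiℓ⟩ => ⟨⟨m, hm, him⟩, hiℓ⟩⟩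
  obtain ⟨w₁, hw₁⟩ := (hri i ℓ k hiℓ hik).exists_walk_of_induce
  obtain ⟨w₂, hw₂⟩ := (hs ⟨k, hk⟩ ⟨m, hm⟩).exists_walk_of_induce
  exact hw₁ m (hT.mem_support_of_adj hadj w₁ w₂ fun h => hℓ (hw₂ ℓ h))

end Tree

section Gluing

open SimpleGraph

variable {α β ι : Type*} [Fintype α] [DecidableEq α] [Fintype β] [DecidableEq β] [Nonempty β]
  {C : ι → Finset α} {b : ∀ j, (C j → β) → ℝ}

lemma exists_marg_eq_insert [DecidableEq ι] {s : Finset ι} {ℓ m : ι} (hm : m ∈ s)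
    (hsep : s.biUnion C ∩ C ℓ = C m ∩ C ℓ) (hb : 0 ≤ b ℓ)
    (hcons : ∀ x, cliqueMarg (C m) (b m) (C ℓ) x = cliqueMarg (C ℓ) (b ℓ) (C m) x)
    {p' : (α → β) → ℝ} (hp' : 0 ≤ p')
    (hmarg : ∀ j ∈ s, marg (C j) p' = marg (C j) (lift (C j) (b j))) :
    ∃ p, 0 ≤ p ∧ ∀ j ∈ insert ℓ s, marg (C j) p = marg (C j) (lift (C j) (b j)) := by
  have hS : marg (s.biUnion C ∩ C ℓ) p' = marg (s.biUnion C ∩ C ℓ) (lift (C ℓ) (b ℓ)) := by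
    funext x
    rw [hsep, marg_eq_of_marg_eq inter_subset_left (hmarg m hm), marg_lift inter_subset_left,
      marg_lift inter_subset_right, cliqueMarg_inter_left, hcons, inter_comm,
      cliqueMarg_inter_left]
  obtain ⟨p, hp, hV, hℓ⟩ := exists_marg_eq_of_marg_inter_eq hp' (lift_nonneg hb) dependsOn_lift hS
  refine ⟨p, hp, forall_mem_insert _ _ _ |>.2 ⟨hℓ, fun j hj => ?_⟩⟩
  exact (marg_eq_of_marg_eq (subset_biUnion_of_mem C hj) hV).trans (hmarg j hj)

variable [Fintype ι] [DecidableEq ι] {T : SimpleGraph ι}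

lemma exists_preconnected_card_eq_marg_eq (hT : T.IsTree) (hri : RunningIntersection T C)
    (hcons : ∀ j k, T.Adj j k → ∀ x,
      cliqueMarg (C j) (b j) (C k) x = cliqueMarg (C k) (b k) (C j) x)
    (hb : ∀ j, 0 ≤ b j) {k : ℕ} (hk₁ : 1 ≤ k) (hk : k ≤ Fintype.card ι) :
    ∃ s : Finset ι, #s = k ∧ (T.induce ↑s).Preconnected ∧
      ∃ p, 0 ≤ p ∧ ∀ j ∈ s, marg (C j) p = marg (C j) (lift (C j) (b j)) := by
  induction k, hk₁ using Nat.le_induction with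
  | base =>
    obtain ⟨r⟩ := hT.connected.nonempty
    refine ⟨{r}, card_singleton r, ?_, lift (C r) (b r), lift_nonneg (hb r), by simp⟩
    rw [coe_singleton]
    exact Preconnected.of_subsingleton
  | succ k hk₁ ih =>
    obtain ⟨s, rfl, hs, p', hp', hmarg⟩ := ih (by omega)
    obtain ⟨v, -, hv⟩ := exists_mem_notMem_of_card_lt_card (t := univ) (by simpa using hk)
    obtain ⟨r, hr⟩ := card_pos.1 (by omega : 0 < #s)
    obtain ⟨w⟩ := hT.connected.preconnected r v
    obtain ⟨d, -, hm, hℓ⟩ := w.exists_boundary_dart s hr hv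
    refine ⟨insert d.snd s, card_insert_of_notMem hℓ, ?_,
      exists_marg_eq_insert hm (biUnion_inter_eq_of_adj hT.isAcyclic hri hs hm hℓ d.adj.symm)
        (hb _) (hcons _ _ d.adj) hp' hmarg⟩
    rw [coe_insert, Set.insert_eq, Set.union_comm]
    exact (connected_induce_union (t := {d.snd}) hs Preconnected.of_subsingleton hm
      (Set.mem_singleton _) d.adj).preconnected

lemma exists_marg_eq_lift (hT : T.IsTree) (hri : RunningIntersection T C)
    (hcons : ∀ j k, T.Adj j k → ∀ x,
      cliqueMarg (C j) (b j) (C k) x = cliqueMarg (C k) (b k) (C j) x)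
    (hb : ∀ j, 0 ≤ b j) :
    ∃ p, 0 ≤ p ∧ ∀ j, marg (C j) p = marg (C j) (lift (C j) (b j)) := by
  obtain ⟨s, hs, -, p, hp, hmarg⟩ := exists_preconnected_card_eq_marg_eq hT hri hcons hb
    (Fintype.card_pos_iff.2 hT.connected.nonempty) le_rfl
  rw [card_eq_iff_eq_univ] at hs
  exact ⟨p, hp, fun j => hmarg j (hs ▸ mem_univ j)⟩

end Gluing

end JunctionTree

open JunctionTree

/-- Local consistency on a tree implies global consistency: if the cliques
`C j ⊆ {0, ..., n-1}` of a CSP over binary variables are arranged in a junction tree `T`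
(a tree on the clique index set satisfying the running intersection property: for every
variable `i`, the cliques containing `i` induce a connected subgraph), and the clique
beliefs are probability distributions agreeing on all separator marginals (adjacent
cliques have equal marginals on their intersection), then there is a global joint
distribution whose clique marginals equal the given beliefs; consequently the CSP induced
by the supports of the beliefs is not frustrated (some global assignment restricts to a
positive-belief configuration on every clique). -/
theorem tree_local_consistency_implies_global
    (n : ℕ) (ι : Type) [Fintype ι]
    (T : SimpleGraph ι) (htree : T.IsTree)
    (C : ι → Finset (Fin n))
    (hri : ∀ i : Fin n, ∀ j k : ι, ∀ hj : i ∈ C j, ∀ hk : i ∈ C k,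
      (T.induce {l : ι | i ∈ C l}).Reachable ⟨j, hj⟩ ⟨k, hk⟩)
    (b : ∀ j : ι, ({v // v ∈ C j} → Bool) → ℝ)
    (hnn : ∀ j : ι, ∀ u : {v // v ∈ C j} → Bool, 0 ≤ b j u)
    (hsum : ∀ j : ι, (∑ u : {v // v ∈ C j} → Bool, b j u) = 1)
    (hcons : ∀ j k : ι, T.Adj j k → ∀ x : Fin n → Bool,
      (∑ u ∈ Finset.univ.filter
          (fun u : {v // v ∈ C j} → Bool =>
            ∀ i : {v // v ∈ C j}, i.val ∈ C k → u i = x i.val), b j u) =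
      (∑ u ∈ Finset.univ.filter
          (fun u : {v // v ∈ C k} → Bool =>
            ∀ i : {v // v ∈ C k}, i.val ∈ C j → u i = x i.val), b k u)) :
    (∃ p : (Fin n → Bool) → ℝ,
        (∀ x, 0 ≤ p x) ∧ (∑ x, p x) = 1 ∧
        ∀ j : ι, ∀ u : {v // v ∈ C j} → Bool,
          (∑ x ∈ Finset.univ.filter
              (fun x : Fin n → Bool => ∀ i : {v // v ∈ C j}, x i.val = u i), p x)
            = b j u) ∧
    (∃ x : Fin n → Bool, ∀ j : ι,
      0 < b j (fun i : {v // v ∈ C j} => x i.val)) := by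
  classical
  obtain ⟨p, hp, hmarg⟩ := exists_marg_eq_lift htree hri hcons hnn
  have hmarg' : ∀ j x, marg (C j) p x = b j ((C j).restrict x) := fun j x => by
    rw [hmarg j, marg_lift_self]
  have hp1 : ∑ x, p x = 1 := by
    obtain ⟨j⟩ := htree.connected.nonempty
    have := congrFun (marg_eq_of_marg_eq (empty_subset (C j)) (hmarg j)) fun _ => false
    rwa [marg_empty, marg_lift (empty_subset _), cliqueMarg_empty, hsum j] at this
  obtain ⟨x, -, hx⟩ := exists_lt_of_sum_lt (s := univ) (f := 0) (g := p) (by simp [hp1])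
  refine ⟨⟨p, hp, hp1, fun j u => ?_⟩, x, fun j => ?_⟩
  · obtain ⟨x₀, rfl⟩ := restrict_surjective (C j) u
    rw [← hmarg', marg, ← filter_restrict_eq_fiber]
    simp [funext_iff]
  · change 0 < b j ((C j).restrict x)
    rw [← hmarg']
    exact hx.trans_le (le_marg hp _ _)
end

section
/- ML certificate property: if the optimal solution of the LP decoder is integral, i.e., there is a vector x* ∈ {0,1}^n with b_i(x*_i) = 1 for all i and all check-node beliefs integral and consistent, then x* is a codeword and x* minimizes the linear cost ∑_i l_i x_i over all codewords (that is, x* is a maximum likelihood codeword). -/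
/-- `x ∈ {0,1}ⁿ` is a codeword iff every parity check `c` has an even number of ones. -/
def Codeword (n : ℕ) (checks : Finset (Finset (Fin n))) (x : Fin n → Bool) : Prop :=
  ∀ c ∈ checks, Even ((c.filter fun i => x i = true).card)

/-- Feasibility for the basic LP decoder: singleton beliefs `bi` are normalized and in
`[0,1]`; each check belief `bc c` is in `[0,1]`, vanishes on odd-weight (non local
codeword) configurations, and marginalizes consistently to the singleton beliefs. -/
def LPFeasible (n : ℕ) (checks : Finset (Finset (Fin n)))
    (bi : Fin n → Bool → ℝ)
    (bc : (c : Finset (Fin n)) → ({i // i ∈ c} → Bool) → ℝ) : Prop :=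
  (∀ i, bi i false + bi i true = 1) ∧
  (∀ i v, 0 ≤ bi i v) ∧ (∀ i v, bi i v ≤ 1) ∧
  (∀ c ∈ checks, ∀ u, 0 ≤ bc c u) ∧ (∀ c ∈ checks, ∀ u, bc c u ≤ 1) ∧
  (∀ c ∈ checks, ∀ u : {i // i ∈ c} → Bool,
    ¬ Even ((Finset.univ.filter fun i : {i // i ∈ c} => u i = true).card) → bc c u = 0) ∧
  (∀ c ∈ checks, ∀ i : Fin n, ∀ hi : i ∈ c, ∀ v : Bool,
    bi i v =
      ∑ u ∈ Finset.univ.filter (fun u : {j // j ∈ c} → Bool => u ⟨i, hi⟩ = v), bc c u)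

/-- LP decoding objective `∑_i ∑_{x_i} l_i x_i b_i(x_i) = ∑_i l_i b_i(1)`. -/
def LPObjective (n : ℕ) (l : Fin n → ℝ) (bi : Fin n → Bool → ℝ) : ℝ :=
  ∑ i, l i * bi i true

/-- Linear cost `∑_i l_i x_i` of a binary word. -/
def wordCost (n : ℕ) (l : Fin n → ℝ) (x : Fin n → Bool) : ℝ :=
  ∑ i, l i * (if x i then 1 else 0)

/-! If the singleton beliefs put mass one on `x`, then by consistency every check belief of
positive mass agrees with `x` on its check; such a configuration is a local codeword, so `x`
satisfies every check. Conversely every codeword `y` induces a feasible integral point whose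
LP objective is its cost, so LP optimality of `x` is ML optimality. -/

theorem Finset.card_filter_univ_subtype {α : Type*} (c : Finset α) (p : α → Prop)
    [DecidablePred p] :
    (Finset.univ.filter fun i : {i // i ∈ c} => p i.val).card = (c.filter p).card := by
  rw [← Finset.card_map (Function.Embedding.subtype _)]
  congr 1
  ext a
  simp [and_comm]

theorem eq_ite_of_add_eq_one {b : Bool → ℝ} {v : Bool} (hsum : b false + b true = 1)
    (hv : b v = 1) (w : Bool) : b w = if v = w then 1 else 0 := by
  cases v <;> cases w <;> simp only [ite_true, ite_false, reduceCtorEq] <;> linarith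

section

variable {n : ℕ} {checks : Finset (Finset (Fin n))} {x : Fin n → Bool}

theorem LPObjective_eq_wordCost {l : Fin n → ℝ} {bi : Fin n → Bool → ℝ}
    (hnorm : ∀ i, bi i false + bi i true = 1) (hx : ∀ i, bi i (x i) = 1) :
    LPObjective n l bi = wordCost n l x := by
  refine Finset.sum_congr rfl fun i _ => ?_
  rw [eq_ite_of_add_eq_one (hnorm i) (hx i)]

def wordBeliefs (y : Fin n → Bool) : Fin n → Bool → ℝ :=
  fun i v => if y i = v then 1 else 0

def wordCheckBeliefs (y : Fin n → Bool) (c : Finset (Fin n)) (u : {i // i ∈ c} → Bool) : ℝ :=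
  if u = fun j => y j.1 then 1 else 0

theorem lpFeasible_wordBeliefs {y : Fin n → Bool} (hy : Codeword n checks y) :
    LPFeasible n checks (wordBeliefs y) (wordCheckBeliefs y) := by
  refine ⟨fun i => by cases h : y i <;> simp [wordBeliefs, h],
    fun i v => by simp only [wordBeliefs]; split <;> norm_num,
    fun i v => by simp only [wordBeliefs]; split <;> norm_num,
    fun c _ u => by simp only [wordCheckBeliefs]; split <;> norm_num,
    fun c _ u => by simp only [wordCheckBeliefs]; split <;> norm_num, ?_, ?_⟩
  · intro c hc u hodd
    rw [wordCheckBeliefs, if_neg]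
    rintro rfl
    rw [Finset.card_filter_univ_subtype c (fun i => y i = true)] at hodd
    exact hodd (hy c hc)
  · intro c _ i hi v
    simp [wordBeliefs, wordCheckBeliefs, Finset.sum_ite_eq']

theorem eq_restrict_of_checkBelief_ne_zero {bi : Fin n → Bool → ℝ} {c : Finset (Fin n)}
    {bc : ({i // i ∈ c} → Bool) → ℝ} (hnn : ∀ u, 0 ≤ bc u)
    (hmarg : ∀ i (hi : i ∈ c) v, bi i v = ∑ u ∈ Finset.univ.filter (fun u => u ⟨i, hi⟩ = v), bc u)
    (hzero : ∀ i, bi i (!x i) = 0) {u : {i // i ∈ c} → Bool} (hu : bc u ≠ 0) :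
    u = fun j => x j.1 := by
  funext ⟨i, hi⟩
  by_contra hne
  have hsum := hmarg i hi (!x i)
  rw [hzero i, eq_comm, Finset.sum_eq_zero_iff_of_nonneg fun u _ => hnn u] at hsum
  exact hu (hsum u (by simpa using Bool.eq_not.mpr hne))

theorem LPFeasible.codeword {bi : Fin n → Bool → ℝ}
    {bc : (c : Finset (Fin n)) → ({i // i ∈ c} → Bool) → ℝ}
    (hfeas : LPFeasible n checks bi bc) (hx : ∀ i, bi i (x i) = 1) : Codeword n checks x := by
  obtain ⟨hnorm, -, -, hnn, -, hodd, hmarg⟩ := hfeas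
  have hzero : ∀ i, bi i (!x i) = 0 := fun i => by
    simpa using eq_ite_of_add_eq_one (hnorm i) (hx i) (!x i)
  intro c hc
  obtain rfl | ⟨i, hi⟩ := c.eq_empty_or_nonempty
  · simp
  have hmass : ∑ u ∈ Finset.univ.filter (fun u => u ⟨i, hi⟩ = x i), bc c u ≠ 0 := by
    rw [← hmarg c hc i hi, hx i]
    exact one_ne_zero
  obtain ⟨u, -, hu⟩ := Finset.exists_ne_zero_of_sum_ne_zero hmass
  have hux := eq_restrict_of_checkBelief_ne_zero (hnn c hc) (hmarg c hc) hzero hu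
  subst hux
  rw [← Finset.card_filter_univ_subtype]
  by_contra hcard
  exact hu (hodd c hc _ hcard)

end

theorem ml_certificate_general (n : ℕ) (checks : Finset (Finset (Fin n))) (l : Fin n → ℝ)
    (bi : Fin n → Bool → ℝ)
    (bc : (c : Finset (Fin n)) → ({i // i ∈ c} → Bool) → ℝ)
    (hfeas : LPFeasible n checks bi bc)
    (hopt : ∀ bi' bc', LPFeasible n checks bi' bc' →
      LPObjective n l bi ≤ LPObjective n l bi')
    (x : Fin n → Bool)
    (hxint : ∀ i, bi i (x i) = 1) :
    Codeword n checks x ∧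
      ∀ y : Fin n → Bool, Codeword n checks y → wordCost n l x ≤ wordCost n l y := by
  refine ⟨hfeas.codeword hxint, fun y hy => ?_⟩
  have hyfeas := lpFeasible_wordBeliefs hy
  have hobj := hopt _ _ hyfeas
  rwa [LPObjective_eq_wordCost hfeas.1 hxint,
    LPObjective_eq_wordCost hyfeas.1 (fun i => if_pos rfl)] at hobj

/-- ML certificate property: if an optimal solution of the LP decoder is integral, i.e.
there is `x* ∈ {0,1}ⁿ` with `b_i(x*_i) = 1` for all `i` and all check-node beliefs
integral (and the whole point feasible, hence consistent), then `x*` is a codeword and it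
minimizes the linear cost `∑ l_i x_i` over all codewords, i.e. `x*` is an ML codeword. -/
theorem ml_certificate (n : ℕ) (checks : Finset (Finset (Fin n))) (l : Fin n → ℝ)
    (bi : Fin n → Bool → ℝ)
    (bc : (c : Finset (Fin n)) → ({i // i ∈ c} → Bool) → ℝ)
    (hfeas : LPFeasible n checks bi bc)
    (hopt : ∀ bi' bc', LPFeasible n checks bi' bc' →
      LPObjective n l bi ≤ LPObjective n l bi')
    (x : Fin n → Bool)
    (hxint : ∀ i, bi i (x i) = 1)
    (hcint : ∀ c ∈ checks, ∀ u, bc c u = 0 ∨ bc c u = 1) :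
    Codeword n checks x ∧
      ∀ y : Fin n → Bool, Codeword n checks y → wordCost n l x ≤ wordCost n l y :=
  ml_certificate_general n checks l bi bc hfeas hopt x hxint
end
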